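/- Let Z be an F-semimartingale with Z_0 = 0, let (T_t) be a finite F-time-change with lim_{t→∞} T_t = ∞, and let S be the first hitting time process of T. Suppose Z is in synchronization with T. Then the time-changed process Y := Z∘T (i.e., Y_t = Z_{T_t}) is in synchronization with S: almost surely, Y is constant on every interval [S_{t-}, S_t]. -/

import Mathlib

open MeasureTheory Filter Topology Set

namespace TimeChangePaper

variable {Ω : Type*} {m : MeasurableSpace Ω}

/-- A real-valued process has càdlàg paths: right-continuous with left limits. -/
def CadlagPaths (Z : ℝ → Ω → ℝ) : Prop :=
  ∀ ω : Ω, ∀ t : ℝ,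
    Tendsto (fun s => Z s ω) (nhdsWithin t (Set.Ioi t)) (nhds (Z t ω)) ∧
    ∃ l : ℝ, Tendsto (fun s => Z s ω) (nhdsWithin t (Set.Iio t)) (nhds l)

/-- A real-valued process has càglàd paths: left-continuous with right limits. -/
def CagladPaths (H : ℝ → Ω → ℝ) : Prop :=
  ∀ ω : Ω, ∀ t : ℝ,
    Tendsto (fun s => H s ω) (nhdsWithin t (Set.Iio t)) (nhds (H t ω)) ∧
    ∃ l : ℝ, Tendsto (fun s => H s ω) (nhdsWithin t (Set.Ioi t)) (nhds l)

/-- Left limit of the path of `Z` at time `t`. -/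
noncomputable def leftLimP (Z : ℝ → Ω → ℝ) (t : ℝ) (ω : Ω) : ℝ :=
  Function.leftLim (fun s => Z s ω) t

/-- Jump of the path of `Z` at time `t`. -/
noncomputable def jumpP (Z : ℝ → Ω → ℝ) (t : ℝ) (ω : Ω) : ℝ :=
  Z t ω - leftLimP Z t ω

/-- Sum of the values `g s ω` over the (at most countably many nonzero) times
`s ∈ (0, t]`; used for sums of jump contributions `Σ_{0 < s ≤ t} g s ω`. -/
noncomputable def jumpSum (g : ℝ → Ω → ℝ) (t : ℝ) (ω : Ω) : ℝ :=
  ∑' s : ℝ, Set.indicator (Set.Ioc (0:ℝ) t) (fun u => g u ω) s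

/-- An `(F_t)`-time-change: a càdlàg, nondecreasing, nonnegative family of
(ℝ-valued, hence automatically finite) stopping times. -/
structure IsTimeChange (F : Filtration ℝ m) (T : ℝ → Ω → ℝ) : Prop where
  mono : ∀ ω, Monotone fun t => T t ω
  nonneg : ∀ ω t, 0 ≤ T t ω
  cadlag : CadlagPaths T
  stopping : ∀ t : ℝ, IsStoppingTime F (fun ω => ((T t ω : ℝ) : WithTop ℝ))

/-- `Z` is in synchronization with the time-change `T`: almost surely, `Z` is
constant on every interval `[T_{t-}, T_t]`. -/
def Synchronized (P : Measure Ω) (Z T : ℝ → Ω → ℝ) : Prop :=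
  ∀ᵐ ω ∂P, ∀ t : ℝ, 0 ≤ t → ∀ u ∈ Set.Icc (leftLimP T t ω) (T t ω),
    ∀ v ∈ Set.Icc (leftLimP T t ω) (T t ω), Z u ω = Z v ω

/-- Local martingale: there is a localizing sequence of stopping times increasing
to infinity such that each stopped process is a martingale. -/
def IsLocalMartingale (F : Filtration ℝ m) (P : Measure Ω) (M : ℝ → Ω → ℝ) : Prop :=
  ∃ τ : ℕ → Ω → ℝ, (∀ n, IsStoppingTime F (fun ω => ((τ n ω : ℝ) : WithTop ℝ))) ∧
    (∀ᵐ ω ∂P, Tendsto (fun n => τ n ω) atTop atTop) ∧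
    ∀ n, Martingale (MeasureTheory.stoppedProcess M (fun ω => ((τ n ω : ℝ) : WithTop ℝ))) F P

/-- `Z` is an `F`-semimartingale: a càdlàg adapted process which is the sum of a
càdlàg local martingale and a càdlàg adapted process of finite variation on compacts. -/
def IsSemimartingale (F : Filtration ℝ m) (P : Measure Ω) (Z : ℝ → Ω → ℝ) : Prop :=
  CadlagPaths Z ∧ Adapted F Z ∧
  ∃ M A : ℝ → Ω → ℝ,
    IsLocalMartingale F P M ∧ CadlagPaths M ∧
    CadlagPaths A ∧ Adapted F A ∧
    (∀ ω, ∀ a b : ℝ, BoundedVariationOn (fun s => A s ω) (Set.Icc a b)) ∧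
    ∀ᵐ ω ∂P, ∀ t, Z t ω = M t ω + A t ω

/-- The predictable σ-algebra on `ℝ × Ω`, generated by the left-open stochastic
intervals `(s,t] × A` with `A ∈ F_s`, together with `{0} × A` with `A ∈ F_0`. -/
def predictableSigma (F : Filtration ℝ m) : MeasurableSpace (ℝ × Ω) :=
  MeasurableSpace.generateFrom
    ({C : Set (ℝ × Ω) | ∃ s t : ℝ, ∃ A : Set Ω,
        s ≤ t ∧ MeasurableSet[F s] A ∧ C = Set.Ioc s t ×ˢ A} ∪
     {C : Set (ℝ × Ω) | ∃ A : Set Ω, MeasurableSet[F 0] A ∧ C = ({0} : Set ℝ) ×ˢ A})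

/-- A process is `F`-predictable if it is measurable w.r.t. the predictable σ-algebra. -/
def Predictable (F : Filtration ℝ m) (H : ℝ → Ω → ℝ) : Prop :=
  @Measurable (ℝ × Ω) ℝ (predictableSigma F) _ fun p => H p.1 p.2

/-- Mesh of the partition `π` truncated to `[0, t]`. -/
noncomputable def mesh (π : ℕ → ℝ) (t : ℝ) : ℝ :=
  ⨆ k : ℕ, (min (π (k + 1)) t - min (π k) t)

/-- `I` is (a version of) the Itô-type stochastic integral `t ↦ ∫_0^t H_s dZ_s`:
for every `t ≥ 0` and every deterministic sequence of partitions of `[0, ∞)` whose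
mesh on `[0, t]` tends to `0`, the left-endpoint Riemann sums converge in
probability to `I_t`. -/
def IsStochIntegral (P : Measure Ω) (H Z I : ℝ → Ω → ℝ) : Prop :=
  ∀ t : ℝ, 0 ≤ t → ∀ π : ℕ → ℕ → ℝ,
    (∀ n, π n 0 = 0) → (∀ n, Monotone (π n)) →
    (∀ n, Tendsto (fun k => π n k) atTop atTop) →
    Tendsto (fun n => mesh (π n) t) atTop (nhds 0) →
    TendstoInMeasure P
      (fun n ω => ∑' k : ℕ, H (π n k) ω * (Z (min (π n (k + 1)) t) ω - Z (min (π n k) t) ω))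
      atTop (fun ω => I t ω)

/-- First hitting time process (generalized inverse) of the process `S`:
`T_t = inf {u > 0 : S_u > t}`. -/
noncomputable def hittingTimeOf (S : ℝ → Ω → ℝ) (t : ℝ) (ω : Ω) : ℝ :=
  sInf {u : ℝ | 0 < u ∧ t < S u ω}

/-- `D` and `E` are dual: either `E` is the first hitting time process of `D`, or
`D` is the first hitting time process of `E`. -/
def DualPair (D E : ℝ → Ω → ℝ) : Prop :=
  (∀ t : ℝ, 0 ≤ t → ∀ ω, E t ω = hittingTimeOf D t ω) ∨
  (∀ t : ℝ, 0 ≤ t → ∀ ω, D t ω = hittingTimeOf E t ω)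

/-- The pair of a strictly increasing semimartingale `D` (with `D_0 = 0`,
`lim D_t = ∞`) and a continuous time-change `E` (with `E_0 = 0`, `lim E_t = ∞`),
each inducing the other as its first hitting time process. -/
structure IsDualPair (F : Filtration ℝ m) (P : Measure Ω) (D E : ℝ → Ω → ℝ) : Prop where
  semimartD : IsSemimartingale F P D
  strictMonoD : ∀ ω, StrictMonoOn (fun t => D t ω) (Set.Ici (0:ℝ))
  zeroD : ∀ ω, ∀ t ≤ (0:ℝ), D t ω = 0
  infD : ∀ᵐ ω ∂P, Tendsto (fun t => D t ω) atTop atTop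
  timeChangeE : IsTimeChange F E
  contE : ∀ ω, Continuous fun t => E t ω
  zeroE : ∀ ω, ∀ t ≤ (0:ℝ), E t ω = 0
  infE : ∀ᵐ ω ∂P, Tendsto (fun t => E t ω) atTop atTop
  dual : DualPair D E

/-- Right-continuity of the filtration (part of the usual conditions). -/
def RightContinuousFiltration (F : Filtration ℝ m) : Prop :=
  ∀ t : ℝ, (F t : MeasurableSpace Ω) = ⨅ (s : ℝ) (_ : t < s), F s

/-- Completeness of the filtration w.r.t. `P` (part of the usual conditions). -/
def CompleteFiltration (F : Filtration ℝ m) (P : Measure Ω) : Prop :=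
  ∀ t : ℝ, ∀ N : Set Ω, P N = 0 → ∀ N' ⊆ N, MeasurableSet[F t] N'

/-- A standard `F`-Brownian motion: continuous adapted paths started at `0`, with
Gaussian increments `B_t - B_s ~ N(0, t-s)` independent of `F_s`. -/
def IsBrownianMotion (F : Filtration ℝ m) (P : Measure Ω) (B : ℝ → Ω → ℝ) : Prop :=
  (∀ ω, ∀ t ≤ (0:ℝ), B t ω = 0) ∧
  (∀ ω, Continuous fun t => B t ω) ∧
  Adapted F B ∧
  ∀ s t : ℝ, 0 ≤ s → s ≤ t →
    P.map (fun ω => B t ω - B s ω) = ProbabilityTheory.gaussianReal 0 (Real.toNNReal (t - s)) ∧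
    ProbabilityTheory.Indep
      (MeasurableSpace.comap (fun ω => B t ω - B s ω) inferInstance) (F s) P

noncomputable def firstPassage (f : ℝ → ℝ) (t : ℝ) : ℝ :=
  sInf {u : ℝ | 0 < u ∧ t < f u}

def PathSynchronized (z f : ℝ → ℝ) : Prop :=
  ∀ s : ℝ, 0 ≤ s → ∀ u ∈ Icc (Function.leftLim f s) (f s),
    ∀ v ∈ Icc (Function.leftLim f s) (f s), z u = z v

section FirstPassage

variable {f : ℝ → ℝ}

theorem firstPassage_nonneg (f : ℝ → ℝ) (t : ℝ) : 0 ≤ firstPassage f t :=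
  Real.sInf_nonneg fun _ hu => hu.1.le

theorem nonempty_firstPassage_set (hlim : Tendsto f atTop atTop) (t : ℝ) :
    {u : ℝ | 0 < u ∧ t < f u}.Nonempty :=
  ((eventually_gt_atTop 0).and (hlim.eventually_gt_atTop t)).exists

theorem bddBelow_firstPassage_set (f : ℝ → ℝ) (t : ℝ) : BddBelow {u : ℝ | 0 < u ∧ t < f u} :=
  ⟨0, fun _ hu => hu.1.le⟩

theorem firstPassage_mono (hlim : Tendsto f atTop atTop) : Monotone (firstPassage f) :=
  fun _ _ hst => csInf_le_csInf (bddBelow_firstPassage_set f _) (nonempty_firstPassage_set hlim _)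
    fun _ hu => ⟨hu.1, hst.trans_lt hu.2⟩

theorem le_of_lt_firstPassage {t w : ℝ} (hw : 0 < w) (h : w < firstPassage f t) : f w ≤ t :=
  not_lt.1 fun hlt => h.not_ge (csInf_le (bddBelow_firstPassage_set f t) ⟨hw, hlt⟩)

theorem lt_of_firstPassage_lt (hf : Monotone f) (hlim : Tendsto f atTop atTop) {t w : ℝ}
    (h : firstPassage f t < w) : t < f w := by
  obtain ⟨u, hu, huw⟩ := exists_lt_of_csInf_lt (nonempty_firstPassage_set hlim t) h
  exact hu.2.trans_le (hf huw.le)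

theorem le_of_leftLim_firstPassage_lt (hf : Monotone f) (hlim : Tendsto f atTop atTop)
    {t w : ℝ} (h : Function.leftLim (firstPassage f) t < w) : t ≤ f w :=
  le_of_forall_lt fun _ hs =>
    lt_of_firstPassage_lt hf hlim (((firstPassage_mono hlim).le_leftLim hs).trans_lt h)

theorem le_apply_leftLim_firstPassage (hf : Monotone f) (hlim : Tendsto f atTop atTop) (t : ℝ)
    (hright : ContinuousWithinAt f (Ioi (Function.leftLim (firstPassage f) t))
      (Function.leftLim (firstPassage f) t)) :
    t ≤ f (Function.leftLim (firstPassage f) t) :=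
  ge_of_tendsto hright (eventually_nhdsWithin_of_forall fun _ hw =>
    le_of_leftLim_firstPassage_lt hf hlim hw)

theorem leftLim_apply_firstPassage (hf : Monotone f) (hlim : Tendsto f atTop atTop) {t : ℝ}
    (hjump : Function.leftLim (firstPassage f) t < firstPassage f t) :
    Function.leftLim f (firstPassage f t) = t := by
  have hleftLim_nonneg : 0 ≤ Function.leftLim (firstPassage f) t :=
    (firstPassage_nonneg f (t - 1)).trans ((firstPassage_mono hlim).le_leftLim (by linarith))
  obtain ⟨w, hw⟩ := exists_between hjump
  apply le_antisymm
  · refine le_of_tendsto (hf.tendsto_leftLim _) ?_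
    filter_upwards [Ioo_mem_nhdsLT hw.2] with u hu
    exact le_of_lt_firstPassage (hleftLim_nonneg.trans_lt (hw.1.trans hu.1)) hu.2
  · exact (le_of_leftLim_firstPassage_lt hf hlim hw.1).trans (hf.le_leftLim hw.2)

/- On a jump interval `[g (t-), g t]` of `g = firstPassage f`, the path `f` takes values in
`[t, f (g t)] = [f (g t -), f (g t)]`, a single jump interval of `f`. -/
theorem PathSynchronized.comp_firstPassage {z : ℝ → ℝ} (hz : PathSynchronized z f)
    (hf : Monotone f) (hright : ∀ x, ContinuousWithinAt f (Ioi x) x)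
    (hlim : Tendsto f atTop atTop) :
    PathSynchronized (z ∘ f) (firstPassage f) := by
  intro t _ u hu v hv
  rcases lt_or_ge (Function.leftLim (firstPassage f) t) (firstPassage f t) with hjump | hnojump
  · have hmaps : ∀ w ∈ Icc (Function.leftLim (firstPassage f) t) (firstPassage f t),
        f w ∈ Icc (Function.leftLim f (firstPassage f t)) (f (firstPassage f t)) := fun w hw => by
      rw [leftLim_apply_firstPassage hf hlim hjump]
      exact ⟨(le_apply_leftLim_firstPassage hf hlim t (hright _)).trans (hf hw.1), hf hw.2⟩
    exact hz _ (firstPassage_nonneg f t) _ (hmaps u hu) _ (hmaps v hv)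
  · rw [le_antisymm (hu.2.trans (hnojump.trans hv.1)) (hv.2.trans (hnojump.trans hu.1))]

end FirstPassage

theorem timeChanged_process_synchronized_general
    (F : Filtration ℝ m) (P : Measure Ω)
    (Z T S : ℝ → Ω → ℝ)
    (hT : IsTimeChange F T)
    (hTinf : ∀ᵐ ω ∂P, Tendsto (fun t => T t ω) atTop atTop)
    (hS : ∀ t ω, S t ω = hittingTimeOf T t ω)
    (hsync : Synchronized P Z T) :
    Synchronized P (fun t ω => Z (T t ω) ω) S := by
  filter_upwards [hTinf, hsync] with ω hTinfω hsyncω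
  change PathSynchronized (fun s => Z (T s ω) ω) (fun t => S t ω)
  rw [show (fun t => S t ω) = firstPassage (fun s => T s ω) from funext fun t => hS t ω]
  exact PathSynchronized.comp_firstPassage hsyncω (hT.mono ω) (fun x => (hT.cadlag ω x).1) hTinfω

/-- Let `Z` be an `F`-semimartingale with `Z_0 = 0`, `T` a finite
`F`-time-change with `T_0 = 0` and `lim_{t→∞} T_t = ∞` a.s., and `S` the first
hitting time process of `T`. If `Z` is in synchronization with `T`, then the
time-changed process `Y = Z ∘ T` is in synchronization with `S`. -/
theorem timeChanged_process_synchronized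
    (F : Filtration ℝ m) (P : Measure Ω) [IsProbabilityMeasure P]
    (Z T S : ℝ → Ω → ℝ)
    (hZ : IsSemimartingale F P Z)
    (hZ0 : ∀ ω, ∀ t ≤ (0:ℝ), Z t ω = 0)
    (hT : IsTimeChange F T)
    (hT0 : ∀ ω, ∀ t ≤ (0:ℝ), T t ω = 0)
    (hTinf : ∀ᵐ ω ∂P, Tendsto (fun t => T t ω) atTop atTop)
    (hS : ∀ t ω, S t ω = hittingTimeOf T t ω)
    (hsync : Synchronized P Z T) :
    Synchronized P (fun t ω => Z (T t ω) ω) S :=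
  timeChanged_process_synchronized_general F P Z T S hT hTinf hS hsync

end TimeChangePaper
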